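/- arXiv:2002.02515 — 2 statements merged into one kernel-verified Lean document; each statement's English description precedes it below -/
import Mathlib

section
/- Let D ≥ 2 be a natural number and B > 0. Let h : ℝ^D → ℝ be a function for which there exist finitely many D-simplices S₁, …, S_M (each the convex hull of D + 1 affinely independent points of ℝ^D) with pairwise disjoint interiors whose union contains [−B, B]^D, and affine functions ℓ₁, …, ℓ_M : ℝ^D → ℝ such that h(x) = ℓ_m(x) for every x in the interior of S_m and every m. Then for every δ > 0 there exist a natural number N, an affine function g₀ : ℝ^D → ℝ, and for each j ∈ {1, …, N} affine functions h_{1,j}, …, h_{D,j} : ℝ^D → ℝ, strictly positive reals μ_{1,j}, …, μ_{D−1,j}, and a real coefficient cⱼ, such that, with F^{(j)} the fan-shaped function built from (h_{1,j}, …, h_{D,j}) and (μ_{1,j}, …, μ_{D−1,j}), the Lebesgue measure of { x ∈ [−B, B]^D : h(x) ≠ g₀(x) + Σ_{j=1}^{N} cⱼ·F^{(j)}(x) } is less than δ. (This is the wide-network half of the ReLU duality theorem for multivariate networks, stated for piecewise affine functions over a simplicial cover.) -/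
open MeasureTheory

/-- A function `(Fin D → ℝ) → ℝ` is affine if it is of the form
`x ↦ ∑ d, w d * x d + r`. -/
def IsAffineFn {D : ℕ} (g : (Fin D → ℝ) → ℝ) : Prop :=
  ∃ (w : Fin D → ℝ) (r : ℝ), ∀ x, g x = (∑ d, w d * x d) + r

/-- The fan-shaped function on `ℝ^D` built from the (0-indexed) affine functions
`h 0, …, h (D-1)` and positive factors `μ 0, …, μ (D-2)` via `F 0 = h 0` and
`F (j+1) x = σ(F j x - μ j * σ(h (j+1) x))` where `σ(u) = max u 0` is ReLU;
the fan-shaped function itself is `fan h μ (D - 1)`. -/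
noncomputable def fan {D : ℕ} (h : ℕ → (Fin D → ℝ) → ℝ) (μ : ℕ → ℝ) :
    ℕ → (Fin D → ℝ) → ℝ
  | 0 => h 0
  | j + 1 => fun x => max (fan h μ j x - μ j * max (h (j + 1) x) 0) 0

/-!
Let `λ₀, …, λ_D` be the barycentric coordinates of a simplex of the cover, `ℓ` its affine piece
and `1_J = 1[∀ j ∈ J, λⱼ ≥ 0]`. Since the `λᵢ` sum to `1`, some `λᵢ ≥ 0`, and inclusion–exclusion
over the proper nonempty `J` gives `ℓ · 1_univ = (-1)^D ℓ + ∑ (-1)^(D + #J) ℓ · 1_J`.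

Off the set where some `|λᵢ| ≤ η`, whose measure is small for small `η`, the fan with head `p`,
cuts `-λₖ` (`k ∈ K`) and a large constant factor `μ` equals `max(p, 0) · 1_K`: a violated cut
exceeds `η`, so `μ` times it swamps the bounded head. A fan has only `D - 1` cuts. For
`#J ≤ D - 1`, `ℓ · 1_J` is the fan with head `ℓ + Θ` minus the fan with head `Θ`, where `|ℓ| ≤ Θ`.
For `J = univ.erase i₀` the head supplies the missing condition: the fan with head `λⱼ + a`
(`0 ≤ a ≤ η`) and cuts `J.erase j` is `(λⱼ + a) · 1_J`, and
`ℓ = ℓ(v_{i₀}) + ∑_{j ∈ J} (ℓ(vⱼ) - ℓ(v_{i₀})) λⱼ`.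
-/

open Finset Filter Topology

theorem Finset.Nonempty.exists_seq_onto {ι : Type*} {K : Finset ι} (hK : K.Nonempty) :
    ∃ σ : ℕ → ι, (∀ t, σ t ∈ K) ∧ ∀ k ∈ K, ∃ t < #K, σ t = k := by
  classical
  obtain ⟨k₀, hk₀⟩ := hK
  refine ⟨fun t => if ht : t < #K then K.equivFin.symm ⟨t, ht⟩ else k₀, fun t => ?_,
    fun k hk => ⟨K.equivFin ⟨k, hk⟩, (K.equivFin ⟨k, hk⟩).isLt, by simp⟩⟩
  dsimp only
  split_ifs
  exacts [coe_mem _, hk₀]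

theorem Set.indicator_max_add_erase {X ι : Type*} [DecidableEq ι] (u : ι → X → ℝ)
    {J : Finset ι} {j : ι} (hj : j ∈ J) {η a : ℝ} {x : X} (hx : η < |u j x|) (ha : 0 ≤ a)
    (haη : a ≤ η) :
    {y | ∀ k ∈ J.erase j, 0 ≤ u k y}.indicator (fun y => max (u j y + a) 0) x =
      {y | ∀ k ∈ J, 0 ≤ u k y}.indicator (fun y => u j y + a) x := by
  have hiff : x ∈ {y | ∀ k ∈ J, 0 ≤ u k y} ↔
      0 ≤ u j x ∧ x ∈ {y | ∀ k ∈ J.erase j, 0 ≤ u k y} := by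
    simp only [Set.mem_ofPred_eq]
    conv_lhs => rw [← insert_erase hj]
    exact Finset.forall_mem_insert _ _ _
  by_cases hj0 : 0 ≤ u j x
  · by_cases hK : x ∈ {y | ∀ k ∈ J.erase j, 0 ≤ u k y}
    · rw [Set.indicator_of_mem hK, Set.indicator_of_mem (hiff.2 ⟨hj0, hK⟩),
        max_eq_left (add_nonneg hj0 ha)]
    · rw [Set.indicator_of_notMem hK, Set.indicator_of_notMem fun h => hK (hiff.1 h).2]
  · have hneg : u j x + a < 0 := by
      rw [abs_of_neg (not_le.1 hj0)] at hx
      linarith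
    rw [Set.indicator_of_notMem fun h => hj0 (hiff.1 h).1, Set.indicator_apply]
    split_ifs <;> simp [max_eq_right hneg.le]

section Affine

variable {D : ℕ}

theorem isAffineFn_iff_exists_affineMap {g : (Fin D → ℝ) → ℝ} :
    IsAffineFn g ↔ ∃ a : (Fin D → ℝ) →ᵃ[ℝ] ℝ, ⇑a = g := by
  constructor
  · rintro ⟨w, r, hg⟩
    refine ⟨(∑ d, w d • LinearMap.proj d : (Fin D → ℝ) →ₗ[ℝ] ℝ).toAffineMap +
      AffineMap.const ℝ _ r, funext fun x => ?_⟩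
    simp [hg]
  · rintro ⟨a, rfl⟩
    refine ⟨fun d => a.linear (Pi.single d 1), a 0, fun x => ?_⟩
    rw [congrFun a.decomp x, Pi.add_apply]
    congr 1
    conv_lhs => rw [← univ_sum_single x]
    refine (map_sum _ _ _).trans (sum_congr rfl fun d _ => ?_)
    rw [mul_comm, ← smul_eq_mul, ← map_smul, ← Pi.single_smul', smul_eq_mul, mul_one]

theorem isAffineFn_sum_mul {ι : Type*} (s : Finset ι) (c : ι → ℝ)
    {g : ι → (Fin D → ℝ) → ℝ} (hg : ∀ i, IsAffineFn (g i)) :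
    IsAffineFn fun x => ∑ i ∈ s, c i * g i x := by
  choose w r hw using hg
  refine ⟨fun d => ∑ i ∈ s, c i * w i d, ∑ i ∈ s, c i * r i, fun x => ?_⟩
  simp only [hw, mul_add, sum_add_distrib, mul_sum]
  rw [sum_comm]
  simp only [Finset.sum_mul, mul_assoc]

theorem AffineBasis.apply_eq_add_sum_erase {ι E : Type*} [Fintype ι] [DecidableEq ι]
    [AddCommGroup E] [Module ℝ E] (b : AffineBasis ι ℝ E) (f : E →ᵃ[ℝ] ℝ) (i₀ : ι) (x : E) :
    f x = f (b i₀) + ∑ j ∈ univ.erase i₀, (f (b j) - f (b i₀)) * b.coord j x := by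
  have hf : f x = ∑ i, f (b i) * b.coord i x := by
    conv_lhs => rw [← b.affineCombination_coord_eq_self x]
    rw [univ.map_affineCombination _ _ (b.sum_coord_apply_eq_one x),
      affineCombination_eq_linear_combination _ _ _ (b.sum_coord_apply_eq_one x)]
    simp [mul_comm]
  rw [sum_erase _ (by simp), hf, sum_congr rfl fun i _ => sub_mul _ _ _, sum_sub_distrib,
    ← mul_sum, b.sum_coord_apply_eq_one, mul_one]
  ring

theorem AffineBasis.mem_interior_convexHull {ι E : Type*} [Finite ι] [NormedAddCommGroup E]
    [NormedSpace ℝ E] (b : AffineBasis ι ℝ E) {x : E} (hx : x ∈ convexHull ℝ (Set.range b))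
    (hx₀ : ∀ i, b.coord i x ≠ 0) : x ∈ interior (convexHull ℝ (Set.range b)) := by
  rw [b.convexHull_eq_nonneg_coord] at hx
  rw [b.interior_convexHull]
  exact fun i => (hx i).lt_of_ne (hx₀ i).symm

end Affine

section Fan

variable {D : ℕ} {H : ℕ → (Fin D → ℝ) → ℝ} {μ : ℕ → ℝ} {x : Fin D → ℝ}

theorem fan_le_max_head (hμ : ∀ t, 0 ≤ μ t) : ∀ n, fan H μ n x ≤ max (H 0 x) 0
  | 0 => le_max_left _ _
  | n + 1 => max_le ((sub_le_self _ (mul_nonneg (hμ n) (le_max_right _ _))).trans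
      (fan_le_max_head hμ n)) (le_max_right _ _)

theorem fan_succ_eq_max_head_of_cuts_nonpos {n : ℕ} (hcut : ∀ t ≤ n, H (t + 1) x ≤ 0) :
    fan H μ (n + 1) x = max (H 0 x) 0 := by
  induction n with
  | zero => simp [fan, max_eq_right (hcut 0 le_rfl)]
  | succ n ih =>
    simp only [fan] at ih ⊢
    rw [max_eq_right (hcut _ le_rfl), mul_zero, sub_zero, ih fun t ht => hcut t (by omega)]
    exact max_eq_left (le_max_right _ _)

theorem fan_eq_zero_of_head_le_mul_cut (hμ : ∀ t, 0 ≤ μ t) {t n : ℕ} (ht : t < n)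
    (hkill : H 0 x ≤ μ t * H (t + 1) x) : fan H μ n x = 0 := by
  induction n with
  | zero => omega
  | succ n ih =>
    simp only [fan]
    rcases Nat.lt_succ_iff_lt_or_eq.1 ht with ht | rfl
    · rw [ih ht, zero_sub]
      exact max_eq_right (neg_nonpos.2 (mul_nonneg (hμ n) (le_max_right _ _)))
    · refine max_eq_right (sub_nonpos.2 ((fan_le_max_head hμ t).trans (max_le ?_ ?_)))
      · exact hkill.trans (mul_le_mul_of_nonneg_left (le_max_left _ _) (hμ t))
      · exact mul_nonneg (hμ t) (le_max_right _ _)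

end Fan

section FanSpan

variable {D : ℕ}

def fanSpan (D : ℕ) : Submodule ℝ ((Fin D → ℝ) → ℝ) :=
  Submodule.span ℝ {f | ∃ (H : ℕ → (Fin D → ℝ) →ᵃ[ℝ] ℝ) (μ : ℕ → ℝ),
    (∀ t, 0 < μ t) ∧ f = fan (fun t => H t) μ (D - 1)}

theorem exists_sum_fan_of_mem_fanSpan {Φ : (Fin D → ℝ) → ℝ} (hΦ : Φ ∈ fanSpan D) :
    ∃ (N : ℕ) (H : Fin N → ℕ → (Fin D → ℝ) → ℝ) (μ : Fin N → ℕ → ℝ) (c : Fin N → ℝ),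
      (∀ j t, IsAffineFn (H j t)) ∧ (∀ j t, 0 < μ j t) ∧
      ∀ x, Φ x = ∑ j, c j * fan (H j) (μ j) (D - 1) x := by
  obtain ⟨N, c, f, rfl⟩ := Submodule.mem_span_set'.1 hΦ
  choose H μ hμ hf using fun j => (f j).2
  refine ⟨N, fun j t => H j t, μ, c,
    fun j t => isAffineFn_iff_exists_affineMap.2 ⟨H j t, rfl⟩, hμ, fun x => ?_⟩
  simp [hf]

def cutHeads {ι : Type*} (p : (Fin D → ℝ) →ᵃ[ℝ] ℝ) (u : ι → (Fin D → ℝ) →ᵃ[ℝ] ℝ)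
    (σ : ℕ → ι) : ℕ → (Fin D → ℝ) →ᵃ[ℝ] ℝ
  | 0 => p
  | t + 1 => -u (σ t)

variable {ι : Type*} {s : Set (Fin D → ℝ)} {η : ℝ}

theorem exists_mem_fanSpan_eq_indicator_max (u : ι → (Fin D → ℝ) →ᵃ[ℝ] ℝ) (hs : IsCompact s)
    (hη : 0 < η) (p : (Fin D → ℝ) →ᵃ[ℝ] ℝ) {K : Finset ι} (hK : K.Nonempty)
    (hKD : #K ≤ D - 1) :
    ∃ φ ∈ fanSpan D, ∀ x ∈ s, (∀ k ∈ K, η < |u k x|) →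
      φ x = {y | ∀ k ∈ K, 0 ≤ u k y}.indicator (fun y => max (p y) 0) x := by
  obtain ⟨σ, hσK, hσ⟩ := hK.exists_seq_onto
  obtain ⟨C, hC⟩ := hs.exists_bound_of_continuousOn p.continuous_of_finiteDimensional.continuousOn
  obtain ⟨n, hn⟩ : ∃ n, D - 1 = n + 1 := ⟨D - 2, by have := hK.card_pos; omega⟩
  set μ := (|C| + 1) / η
  have hμ : 0 < μ := by positivity
  have hpμ : ∀ x ∈ s, p x ≤ μ * η := fun x hx => by
    rw [div_mul_cancel₀ _ hη.ne']
    linarith [(Real.norm_eq_abs _ ▸ hC x hx : |p x| ≤ C), le_abs_self (p x), le_abs_self C]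
  refine ⟨fan (fun t => cutHeads p u σ t) (fun _ => μ) (D - 1),
    Submodule.subset_span ⟨_, _, fun _ => hμ, rfl⟩, fun x hx hgood => ?_⟩
  rw [hn]
  by_cases hpos : x ∈ {y | ∀ k ∈ K, 0 ≤ u k y}
  · rw [Set.indicator_of_mem hpos]
    exact fan_succ_eq_max_head_of_cuts_nonpos fun t _ => neg_nonpos.2 (hpos _ (hσK t))
  · rw [Set.indicator_of_notMem hpos]
    rw [Set.mem_ofPred_eq] at hpos
    push Not at hpos
    obtain ⟨k, hk, hneg⟩ := hpos
    obtain ⟨t, ht, rfl⟩ := hσ k hk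
    have hcut : η < -u (σ t) x := abs_of_neg hneg ▸ hgood _ hk
    refine fan_eq_zero_of_head_le_mul_cut (fun _ => hμ.le) (ht.trans_le (hn ▸ hKD)) ?_
    exact (hpμ x hx).trans (mul_le_mul_of_nonneg_left hcut.le hμ.le)

theorem exists_mem_fanSpan_eq_indicator_of_card_le (u : ι → (Fin D → ℝ) →ᵃ[ℝ] ℝ)
    (ℓ : (Fin D → ℝ) →ᵃ[ℝ] ℝ) (hs : IsCompact s) (hη : 0 < η) {J : Finset ι}
    (hJ : J.Nonempty) (hJD : #J ≤ D - 1) :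
    ∃ Ψ ∈ fanSpan D, ∀ x ∈ s, (∀ j ∈ J, η < |u j x|) →
      Ψ x = {y | ∀ j ∈ J, 0 ≤ u j y}.indicator ℓ x := by
  obtain ⟨Θ, hΘ⟩ := hs.exists_bound_of_continuousOn ℓ.continuous_of_finiteDimensional.continuousOn
  obtain ⟨φ₁, hφ₁, hφ₁x⟩ :=
    exists_mem_fanSpan_eq_indicator_max u hs hη (ℓ + AffineMap.const ℝ _ Θ) hJ hJD
  obtain ⟨φ₂, hφ₂, hφ₂x⟩ :=
    exists_mem_fanSpan_eq_indicator_max u hs hη (AffineMap.const ℝ _ Θ) hJ hJD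
  refine ⟨φ₁ - φ₂, sub_mem hφ₁ hφ₂, fun x hx hgood => ?_⟩
  have hℓx := abs_le.1 (Real.norm_eq_abs _ ▸ hΘ x hx)
  rw [Pi.sub_apply, hφ₁x x hx hgood, hφ₂x x hx hgood]
  by_cases hpos : x ∈ {y | ∀ j ∈ J, 0 ≤ u j y}
  · simp only [Set.indicator_of_mem hpos, AffineMap.coe_add, AffineMap.coe_const, Pi.add_apply,
      Function.const_apply]
    rw [max_eq_left (by linarith), max_eq_left (by linarith)]
    ring
  · simp only [Set.indicator_of_notMem hpos, sub_zero]

theorem exists_mem_fanSpan_eq_indicator_add [DecidableEq ι] (u : ι → (Fin D → ℝ) →ᵃ[ℝ] ℝ)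
    (hs : IsCompact s) (hη : 0 < η) {J : Finset ι} {j : ι} (hj : j ∈ J) (hJ : 2 ≤ #J)
    (hJD : #J ≤ D) {a : ℝ} (ha : 0 ≤ a) (haη : a ≤ η) :
    ∃ φ ∈ fanSpan D, ∀ x ∈ s, (∀ k ∈ J, η < |u k x|) →
      φ x = {y | ∀ k ∈ J, 0 ≤ u k y}.indicator (fun y => u j y + a) x := by
  obtain ⟨φ, hφ, hφx⟩ := exists_mem_fanSpan_eq_indicator_max u hs hη
    (u j + AffineMap.const ℝ _ a) (s := s) (K := J.erase j)
    (card_pos.1 (by rw [card_erase_of_mem hj]; omega)) (by rw [card_erase_of_mem hj]; omega)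
  refine ⟨φ, hφ, fun x hx hgood => ?_⟩
  rw [hφx x hx fun k hk => hgood k (mem_of_mem_erase hk)]
  exact Set.indicator_max_add_erase (fun i => u i) hj (hgood j hj) ha haη

theorem exists_mem_fanSpan_eq_indicator_univ_erase [Fintype ι] [DecidableEq ι]
    (b : AffineBasis ι ℝ (Fin D → ℝ)) (ℓ : (Fin D → ℝ) →ᵃ[ℝ] ℝ) (hs : IsCompact s)
    (hη : 0 < η) (hD : 2 ≤ D) (i₀ : ι) :
    ∃ Ψ ∈ fanSpan D, ∀ x ∈ s, (∀ j ∈ univ.erase i₀, η < |b.coord j x|) →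
      Ψ x = {y | ∀ j ∈ univ.erase i₀, 0 ≤ b.coord j y}.indicator ℓ x := by
  set J := univ.erase i₀
  have hJ : #J = D := by
    have := b.card_eq_finrank_add_one
    rw [Module.finrank_fin_fun] at this
    rw [card_erase_of_mem (mem_univ _), card_univ, this, Nat.add_sub_cancel]
  choose! φ hφ hφx using fun j (hj : j ∈ J) => exists_mem_fanSpan_eq_indicator_add b.coord
    hs hη hj (hJ ▸ hD) hJ.le le_rfl hη.le
  obtain ⟨j₀, hj₀⟩ : J.Nonempty := card_pos.1 (by omega)
  obtain ⟨φ₀, hφ₀, hφ₀x⟩ := exists_mem_fanSpan_eq_indicator_add b.coord hs hη hj₀ (hJ ▸ hD)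
    hJ.le hη.le le_rfl
  refine ⟨∑ j ∈ J, (ℓ (b j) - ℓ (b i₀)) • φ j + (ℓ (b i₀) / η) • (φ₀ - φ j₀),
    add_mem (sum_mem fun j hj => Submodule.smul_mem _ _ (hφ j hj))
      (Submodule.smul_mem _ _ (sub_mem hφ₀ (hφ j₀ hj₀))), fun x hx hgood => ?_⟩
  simp only [Pi.add_apply, Finset.sum_apply, Pi.smul_apply, smul_eq_mul, Pi.sub_apply]
  rw [sum_congr rfl fun j hj => by rw [hφx j hj x hx hgood], hφ₀x x hx hgood,
    hφx j₀ hj₀ x hx hgood]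
  by_cases hxJ : x ∈ {y | ∀ j ∈ J, 0 ≤ b.coord j y}
  · simp only [Set.indicator_of_mem hxJ, add_zero]
    rw [b.apply_eq_add_sum_erase ℓ i₀ x]
    field_simp
    ring
  · simp [Set.indicator_of_notMem hxJ]

theorem exists_mem_fanSpan_eq_indicator_of_ne_univ [Fintype ι] [DecidableEq ι]
    (b : AffineBasis ι ℝ (Fin D → ℝ)) (ℓ : (Fin D → ℝ) →ᵃ[ℝ] ℝ) (hs : IsCompact s)
    (hη : 0 < η) (hD : 2 ≤ D) {J : Finset ι} (hJ : J.Nonempty) (hJuniv : J ≠ univ) :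
    ∃ Ψ ∈ fanSpan D, ∀ x ∈ s, (∀ i, η < |b.coord i x|) →
      Ψ x = {y | ∀ j ∈ J, 0 ≤ b.coord j y}.indicator ℓ x := by
  by_cases hJD : #J ≤ D - 1
  · obtain ⟨Ψ, hΨ, hΨx⟩ := exists_mem_fanSpan_eq_indicator_of_card_le b.coord ℓ hs hη hJ hJD
    exact ⟨Ψ, hΨ, fun x hx hgood => hΨx x hx fun j _ => hgood j⟩
  · obtain ⟨i₀, hi₀⟩ : ∃ i₀, i₀ ∉ J := by simpa [eq_univ_iff_forall] using hJuniv
    have hcard : Fintype.card ι = D + 1 := by simpa using b.card_eq_finrank_add_one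
    obtain rfl : J = univ.erase i₀ := eq_of_subset_of_card_le
      (fun j hj => mem_erase.2 ⟨ne_of_mem_of_not_mem hj hi₀, mem_univ j⟩)
      (by rw [card_erase_of_mem (mem_univ _), card_univ, hcard]; omega)
    obtain ⟨Ψ, hΨ, hΨx⟩ := exists_mem_fanSpan_eq_indicator_univ_erase b ℓ hs hη hD i₀
    exact ⟨Ψ, hΨ, fun x hx hgood => hΨx x hx fun j _ => hgood j⟩

end FanSpan

theorem sum_ite_forall_neg_one_pow {ι : Type*} [Fintype ι] [DecidableEq ι] {q : ι → Prop}
    [DecidablePred q] (hq : ∃ i, q i) :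
    ∑ J ∈ univ.filter (fun J : Finset ι => J.Nonempty ∧ J ≠ univ),
        (if ∀ j ∈ J, q j then (-1 : ℝ) ^ #J else 0) =
      (if ∀ i, q i then -(-1) ^ Fintype.card ι else 0) - 1 := by
  obtain ⟨i, hi⟩ := hq
  have hall : ∑ J, (if ∀ j ∈ J, q j then (-1 : ℝ) ^ #J else 0) = 0 := by
    have hP : (univ.filter q).Nonempty := ⟨i, mem_filter.2 ⟨mem_univ i, hi⟩⟩
    have := sum_powerset_neg_one_pow_card_of_nonempty hP
    rw [← filter_subset_univ, sum_filter] at this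
    exact_mod_cast (sum_congr rfl fun J _ => by simp [subset_iff]).trans this
  have hrest : univ.filter (fun J : Finset ι => ¬(J.Nonempty ∧ J ≠ univ)) = {∅, univ} := by
    ext J
    rw [mem_filter, mem_insert, mem_singleton, ← not_nonempty_iff_eq_empty]
    simp only [mem_univ, true_and]
    tauto
  have hne : (∅ : Finset ι) ≠ univ := (univ_nonempty_iff.2 ⟨i⟩).ne_empty.symm
  rw [← sum_filter_add_sum_filter_not univ (fun J : Finset ι => J.Nonempty ∧ J ≠ univ), hrest,
    sum_pair hne] at hall
  simp only [notMem_empty, IsEmpty.forall_iff, implies_true, if_true, card_empty, pow_zero,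
    mem_univ, forall_const, card_univ] at hall
  split_ifs at hall ⊢ <;> linarith

theorem exists_mem_fanSpan_eq_indicator_interior_convexHull {D : ℕ} {ι : Type*} [Fintype ι]
    [DecidableEq ι] (b : AffineBasis ι ℝ (Fin D → ℝ)) (ℓ : (Fin D → ℝ) →ᵃ[ℝ] ℝ)
    {s : Set (Fin D → ℝ)} (hs : IsCompact s) {η : ℝ} (hη : 0 < η) (hD : 2 ≤ D) :
    ∃ Φ ∈ fanSpan D, ∀ x ∈ s, (∀ i, η < |b.coord i x|) →
      (-1) ^ D * ℓ x + Φ x = (interior (convexHull ℝ (Set.range b))).indicator ℓ x := by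
  set 𝒥 := univ.filter (fun J : Finset ι => J.Nonempty ∧ J ≠ univ)
  choose! Ψ hΨ hΨx using fun J (hJ : J ∈ 𝒥) => exists_mem_fanSpan_eq_indicator_of_ne_univ b ℓ
    hs hη hD (mem_filter.1 hJ).2.1 (mem_filter.1 hJ).2.2
  refine ⟨∑ J ∈ 𝒥, ((-1) ^ (D + #J) : ℝ) • Ψ J,
    sum_mem fun J hJ => Submodule.smul_mem _ _ (hΨ J hJ), fun x hx hgood => ?_⟩
  have hsome : ∃ i, 0 ≤ b.coord i x := by
    by_contra! hneg
    have := sum_neg (fun i _ => hneg i) (univ_nonempty_iff.2 b.nonempty)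
    rw [b.sum_coord_apply_eq_one] at this
    linarith
  have hsum : ∑ J ∈ 𝒥, (-1) ^ (D + #J) * Ψ J x =
      (-1) ^ D * ℓ x * ∑ J ∈ 𝒥, (if ∀ j ∈ J, 0 ≤ b.coord j x then (-1 : ℝ) ^ #J else 0) := by
    rw [mul_sum]
    refine sum_congr rfl fun J hJ => ?_
    rw [hΨx J hJ x hx hgood]
    by_cases hJx : x ∈ {y | ∀ j ∈ J, 0 ≤ b.coord j y}
    · rw [Set.indicator_of_mem hJx, if_pos hJx.out]
      ring
    · rw [Set.indicator_of_notMem hJx]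
      rw [Set.mem_ofPred_eq] at hJx
      rw [if_neg hJx]
      ring
  have hcard : Fintype.card ι = D + 1 := by simpa using b.card_eq_finrank_add_one
  simp only [Finset.sum_apply, Pi.smul_apply, smul_eq_mul]
  rw [hsum, sum_ite_forall_neg_one_pow hsome, hcard, b.interior_convexHull]
  by_cases hx : x ∈ {y | ∀ i, 0 < b.coord i y}
  · have hsq : (-1 : ℝ) ^ D * (-1) ^ D = 1 := by rw [← mul_pow]; simp
    rw [Set.indicator_of_mem hx, if_pos fun i => (hx.out i).le]
    linear_combination ℓ x * hsq
  · have : ¬∀ i, 0 ≤ b.coord i x := fun h => hx fun i =>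
      (h i).lt_of_ne fun h0 => by simpa [← h0] using hη.trans (hgood i)
    rw [Set.indicator_of_notMem hx, if_neg this]
    ring

theorem exists_pos_measure_abs_le_lt {X ι : Type*} [MeasurableSpace X] [Fintype ι]
    {μ : Measure X} {s : Set X} (hs : μ s ≠ ⊤) {f : ι → X → ℝ} (hf : ∀ i, Measurable (f i))
    (h0 : ∀ i, μ {x | f i x = 0} = 0) {ε : ENNReal} (hε : 0 < ε) :
    ∃ η > 0, μ {x | x ∈ s ∧ ∃ i, |f i x| ≤ η} < ε := by
  set ν := μ.restrict s
  have : IsFiniteMeasure ν := isFiniteMeasure_restrict.2 hs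
  have hlim : ∀ i, Tendsto (fun r => ν {x | |f i x| ≤ r}) (𝓝[>] 0) (𝓝 0) := fun i => by
    have := tendsto_measure_biInter_gt (μ := ν) (s := fun r => {x | |f i x| ≤ r}) (a := 0)
      (fun r _ => (measurableSet_le (hf i).abs measurable_const).nullMeasurableSet)
      (fun r r' _ hr x hx => le_trans hx hr) ⟨1, one_pos, measure_ne_top ν _⟩
    rwa [measure_mono_null (fun x hx => ?_) (Measure.absolutelyContinuous_restrict (h0 i))]
      at this
    exact abs_nonpos_iff.1 (le_of_forall_gt_imp_ge_of_dense fun r hr => Set.mem_iInter₂.1 hx r hr)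
  have hsum : Tendsto (fun r => ∑ i, ν {x | |f i x| ≤ r}) (𝓝[>] 0) (𝓝 0) := by
    simpa using tendsto_finsetSum univ fun i _ => hlim i
  obtain ⟨η, hlt, hη⟩ := ((hsum.eventually (gt_mem_nhds hε)).and self_mem_nhdsWithin).exists
  refine ⟨η, hη, lt_of_le_of_lt ?_ hlt⟩
  calc μ {x | x ∈ s ∧ ∃ i, |f i x| ≤ η} = μ ((⋃ i, {x | |f i x| ≤ η}) ∩ s) := by
        congr 1
        ext
        simp [and_comm]
    _ ≤ ν (⋃ i, {x | |f i x| ≤ η}) := Measure.le_restrict_apply _ _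
    _ ≤ ∑ i, ν {x | |f i x| ≤ η} := measure_iUnion_fintype_le _ _

theorem AffineMap.addHaar_setOf_eq_zero {E : Type*} [NormedAddCommGroup E] [NormedSpace ℝ E]
    [MeasurableSpace E] [BorelSpace E] [FiniteDimensional ℝ E] (μ : Measure E)
    [μ.IsAddHaarMeasure] (a : E →ᵃ[ℝ] ℝ) (ha : ∃ x, a x ≠ 0) : μ {x | a x = 0} = 0 := by
  have hzero : {x | a x = 0} = (AffineSubspace.comap a (AffineSubspace.mk' 0 ⊥) : Set E) := by
    ext x
    simp [AffineSubspace.mem_mk']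
  rw [hzero]
  refine Measure.addHaar_affineSubspace μ _ fun htop => ?_
  obtain ⟨x, hx⟩ := ha
  have : x ∈ AffineSubspace.comap a (AffineSubspace.mk' 0 ⊥) :=
    htop ▸ AffineSubspace.mem_top ℝ E x
  exact hx (by simpa [AffineSubspace.mem_mk'] using this)

theorem exists_pos_addHaar_abs_coord_le_lt {κ ι E : Type*} [Fintype κ] [Fintype ι]
    [NormedAddCommGroup E] [NormedSpace ℝ E] [MeasurableSpace E] [BorelSpace E]
    [FiniteDimensional ℝ E] (μ : Measure E) [μ.IsAddHaarMeasure] (b : κ → AffineBasis ι ℝ E)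
    {s : Set E} (hs : μ s ≠ ⊤) {ε : ENNReal} (hε : 0 < ε) :
    ∃ η > 0, μ {x | x ∈ s ∧ ∃ k : κ × ι, |(b k.1).coord k.2 x| ≤ η} < ε := by
  have hmeas : ∀ k : κ × ι, Measurable ((b k.1).coord k.2) := fun k =>
    ((b k.1).coord k.2).continuous_of_finiteDimensional.measurable
  have hnull : ∀ k : κ × ι, μ {x | (b k.1).coord k.2 x = 0} = 0 := fun k =>
    ((b k.1).coord k.2).addHaar_setOf_eq_zero μ
      ⟨b k.1 k.2, by rw [AffineBasis.coord_apply_eq]; exact one_ne_zero⟩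
  exact exists_pos_measure_abs_le_lt hs hmeas hnull hε

theorem AffineIndependent.exists_affineBasis_eq {ι E : Type*} [Fintype ι] [AddCommGroup E]
    [Module ℝ E] [FiniteDimensional ℝ E] {v : ι → E} (hv : AffineIndependent ℝ v)
    (hcard : Fintype.card ι = Module.finrank ℝ E + 1) : ∃ b : AffineBasis ι ℝ E, ⇑b = v :=
  ⟨⟨v, hv, hv.affineSpan_eq_top_iff_card_eq_finrank_add_one.2 hcard⟩, rfl⟩

theorem eq_sum_indicator_of_pairwise_disjoint {X ι : Type*} [Fintype ι] {T : ι → Set X}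
    (hT : ∀ m m', m ≠ m' → T m ∩ T m' = ∅) {f : ι → X → ℝ} {h : X → ℝ}
    (hh : ∀ m, ∀ x ∈ T m, h x = f m x) {m₀ : ι} {x : X} (hx : x ∈ T m₀) :
    h x = ∑ m, (T m).indicator (f m) x := by
  rw [sum_eq_single m₀ (fun m _ hm => Set.indicator_of_notMem (fun hxm => ?_) _)
    (fun h => absurd (mem_univ _) h), Set.indicator_of_mem hx, hh m₀ x hx]
  exact (hT m m₀ hm).subset ⟨hxm, hx⟩

theorem relu_duality_wide_general (D : ℕ) (hD : 2 ≤ D) (B : ℝ)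
    (M : ℕ) (v : Fin M → Fin (D + 1) → (Fin D → ℝ))
    (hv : ∀ m, AffineIndependent ℝ (v m))
    (S : Fin M → Set (Fin D → ℝ))
    (hS : ∀ m, S m = convexHull ℝ (Set.range (v m)))
    (hint : ∀ m m', m ≠ m' → interior (S m) ∩ interior (S m') = ∅)
    (hcover : Set.Icc (fun _ => -B) (fun _ => (B : ℝ)) ⊆ ⋃ m, S m)
    (ℓ : Fin M → (Fin D → ℝ) → ℝ) (hℓ : ∀ m, IsAffineFn (ℓ m))
    (h : (Fin D → ℝ) → ℝ)
    (hh : ∀ m, ∀ x ∈ interior (S m), h x = ℓ m x) :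
    ∀ δ > (0 : ℝ),
      ∃ (N : ℕ) (g₀ : (Fin D → ℝ) → ℝ)
        (hw : Fin N → ℕ → (Fin D → ℝ) → ℝ) (μ : Fin N → ℕ → ℝ) (c : Fin N → ℝ),
        IsAffineFn g₀ ∧
        (∀ j, ∀ i < D, IsAffineFn (hw j i)) ∧ (∀ j, ∀ i < D - 1, 0 < μ j i) ∧
        volume {x : Fin D → ℝ | x ∈ Set.Icc (fun _ => -B) (fun _ => (B : ℝ)) ∧
            h x ≠ g₀ x + ∑ j, c j * fan (hw j) (μ j) (D - 1) x} <
          ENNReal.ofReal δ := by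
  intro δ hδ
  choose b hb using fun m => (hv m).exists_affineBasis_eq (by simp)
  obtain rfl : S = fun m => convexHull ℝ (Set.range (b m)) := funext fun m => by rw [hS, hb]
  choose a ha using fun m => isAffineFn_iff_exists_affineMap.1 (hℓ m)
  obtain ⟨η, hη, hbad⟩ := exists_pos_addHaar_abs_coord_le_lt volume b
    isCompact_Icc.measure_lt_top.ne (ENNReal.ofReal_pos.2 hδ)
  choose Φ hΦ hΦx using fun m =>
    exists_mem_fanSpan_eq_indicator_interior_convexHull (b m) (a m) isCompact_Icc hη hD
  obtain ⟨N, H, μ, c, hH, hμ, hΦsum⟩ := exists_sum_fan_of_mem_fanSpan (sum_mem fun m _ => hΦ m)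
  refine ⟨N, fun x => ∑ m, (-1) ^ D * ℓ m x, H, μ, c, isAffineFn_sum_mul univ _ hℓ,
    fun j i _ => hH j i, fun j i _ => hμ j i, lt_of_le_of_lt (measure_mono ?_) hbad⟩
  rintro x ⟨hxbox, hne⟩
  refine ⟨hxbox, not_forall_not.1 fun hfar => hne ?_⟩
  have hfar' : ∀ m i, η < |(b m).coord i x| := fun m i => not_le.1 (hfar (m, i))
  obtain ⟨m₀, hm₀⟩ := Set.mem_iUnion.1 (hcover hxbox)
  have hx₀ := (b m₀).mem_interior_convexHull hm₀ fun i h0 => by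
    simpa [h0] using hη.trans (hfar' m₀ i)
  rw [eq_sum_indicator_of_pairwise_disjoint hint hh hx₀, ← hΦsum, Finset.sum_apply,
    ← sum_add_distrib]
  exact sum_congr rfl fun m _ => ha m ▸ (hΦx m x hxbox (hfar' m)).symm

/-- The wide-network half of the ReLU duality theorem for multivariate networks:
a function `h` that is piecewise affine over a finite cover of `[-B, B]^D` by
`D`-simplices with pairwise disjoint interiors is represented, up to arbitrarily
small Lebesgue measure, by an affine function plus finitely many fan-shaped
terms. -/
theorem relu_duality_wide (D : ℕ) (hD : 2 ≤ D) (B : ℝ) (hB : 0 < B)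
    (M : ℕ) (v : Fin M → Fin (D + 1) → (Fin D → ℝ))
    (hv : ∀ m, AffineIndependent ℝ (v m))
    (S : Fin M → Set (Fin D → ℝ))
    (hS : ∀ m, S m = convexHull ℝ (Set.range (v m)))
    (hint : ∀ m m', m ≠ m' → interior (S m) ∩ interior (S m') = ∅)
    (hcover : Set.Icc (fun _ => -B) (fun _ => (B : ℝ)) ⊆ ⋃ m, S m)
    (ℓ : Fin M → (Fin D → ℝ) → ℝ) (hℓ : ∀ m, IsAffineFn (ℓ m))
    (h : (Fin D → ℝ) → ℝ)
    (hh : ∀ m, ∀ x ∈ interior (S m), h x = ℓ m x) :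
    ∀ δ > (0 : ℝ),
      ∃ (N : ℕ) (g₀ : (Fin D → ℝ) → ℝ)
        (hw : Fin N → ℕ → (Fin D → ℝ) → ℝ) (μ : Fin N → ℕ → ℝ) (c : Fin N → ℝ),
        IsAffineFn g₀ ∧
        (∀ j, ∀ i < D, IsAffineFn (hw j i)) ∧ (∀ j, ∀ i < D - 1, 0 < μ j i) ∧
        volume {x : Fin D → ℝ | x ∈ Set.Icc (fun _ => -B) (fun _ => (B : ℝ)) ∧
            h x ≠ g₀ x + ∑ j, c j * fan (hw j) (μ j) (D - 1) x} <
          ENNReal.ofReal δ :=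
  relu_duality_wide_general D hD B M v hv S hS hint hcover ℓ hℓ h hh
end

section
/- Let D ≥ 2 be a natural number, B > 0, and let S₁, …, S_n ⊆ [−B, B]^D be pairwise disjoint D-simplices (each the convex hull of D + 1 affinely independent points of ℝ^D). Then for every δ > 0 there exist a natural number N, an affine function g₀ : ℝ^D → ℝ, and for each j ∈ {1, …, N} affine functions h_{1,j}, …, h_{D,j} : ℝ^D → ℝ, strictly positive reals μ_{1,j}, …, μ_{D−1,j}, and a real coefficient cⱼ, such that, with F^{(j)} the fan-shaped function built from (h_{1,j}, …, h_{D,j}) and (μ_{1,j}, …, μ_{D−1,j}), the Lebesgue measure of { x ∈ [−B, B]^D : g₀(x) + Σ_{j=1}^{N} cⱼ·F^{(j)}(x) ≠ 1_{⋃ᵢ Sᵢ}(x) } is less than δ. (This is the content of the generalized De Morgan duality: a disjoint rule system over simplices, i.e., the indicator of the union of the simplices, is represented by a ReLU expression up to arbitrarily small measure.) -/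
open MeasureTheory

/-!
Let `λ₀, …, λ_D` be the barycentric coordinates of a simplex `S`. Inclusion–exclusion over the
half-spaces `{λ_k < 0}` gives `1_S = 1 + ∑ (-1)^|T| 1{λ_k < 0 for all k ∈ T}` over nonempty
`T ⊊ {0, …, D}`; the term `T = {0, …, D}` drops out because `∑ λ_k = 1`. Away from the slabs
`|λ_k| ≤ η`, and for `M` large on the cube, each indicator equals the ramp
`(σ(u) - σ(u - η)) / η` at `u = -λ_t - M ∑_{k ∈ T \ {t}} σ(λ_k)` with `t ∈ T`, and `σ(u)`,
`σ(u - η)` are fan-shaped functions with at most `D - 1` inner terms. Disjointness turns the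
indicator of the union into the sum of the indicators, and the slabs have measure tending to `0`
with `η`.
-/

open Filter Topology Finset
open scoped ENNReal

theorem fan_succ {D : ℕ} (h : ℕ → (Fin D → ℝ) → ℝ) {μ : ℕ → ℝ} (hμ : ∀ j, 0 ≤ μ j) (m : ℕ)
    (x : Fin D → ℝ) :
    fan h μ (m + 1) x = max (h 0 x - ∑ j ∈ range (m + 1), μ j * max (h (j + 1) x) 0) 0 := by
  induction m with
  | zero => simp [fan]
  | succ m ih =>
    have hμh : 0 ≤ μ (m + 1) * max (h (m + 2) x) 0 := mul_nonneg (hμ _) (le_max_right _ _)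
    simp only [fan] at ih ⊢
    rw [ih, sum_range_succ _ (m + 1), ← sub_sub]
    rcases le_total (h 0 x - ∑ j ∈ range (m + 1), μ j * max (h (j + 1) x) 0) 0 with hle | hle
    · rw [max_eq_right hle, zero_sub, max_eq_right (by linarith), max_eq_right (by linarith)]
    · rw [max_eq_left hle]

theorem AffineMap.isAffineFn {D : ℕ} (f : (Fin D → ℝ) →ᵃ[ℝ] ℝ) : IsAffineFn ⇑f := by
  refine ⟨fun d => f.linear fun j => if d = j then 1 else 0, f 0, fun x => ?_⟩
  rw [congrFun f.decomp x, Pi.add_apply, LinearMap.pi_apply_eq_sum_univ f.linear x]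
  simp only [smul_eq_mul, mul_comm]

theorem isAffineFn_const {D : ℕ} (r : ℝ) : IsAffineFn fun _ : Fin D → ℝ => r :=
  ⟨0, r, fun x => by simp⟩

theorem IsAffineFn.add {D : ℕ} {f g : (Fin D → ℝ) → ℝ} (hf : IsAffineFn f) (hg : IsAffineFn g) :
    IsAffineFn (f + g) := by
  obtain ⟨w, r, hw⟩ := hf
  obtain ⟨w', r', hw'⟩ := hg
  exact ⟨w + w', r + r', fun x => by simp [hw, hw', add_mul, sum_add_distrib]; ring⟩

theorem IsAffineFn.const_mul {D : ℕ} {f : (Fin D → ℝ) → ℝ} (hf : IsAffineFn f) (a : ℝ) :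
    IsAffineFn fun x => a * f x := by
  obtain ⟨w, r, hw⟩ := hf
  exact ⟨a • w, a * r, fun x => by simp [hw, mul_add, mul_sum, mul_assoc]⟩

def IsFanCombination {D : ℕ} (f : (Fin D → ℝ) → ℝ) : Prop :=
  ∃ (N : ℕ) (g₀ : (Fin D → ℝ) → ℝ) (hw : Fin N → ℕ → (Fin D → ℝ) → ℝ) (μ : Fin N → ℕ → ℝ)
    (c : Fin N → ℝ), IsAffineFn g₀ ∧ (∀ j, ∀ i < D, IsAffineFn (hw j i)) ∧
    (∀ j, ∀ i < D - 1, 0 < μ j i) ∧ ∀ x, f x = g₀ x + ∑ j, c j * fan (hw j) (μ j) (D - 1) x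

theorem IsAffineFn.isFanCombination {D : ℕ} {f : (Fin D → ℝ) → ℝ} (hf : IsAffineFn f) :
    IsFanCombination f :=
  ⟨0, f, Fin.elim0, Fin.elim0, Fin.elim0, hf, nofun, nofun, by simp⟩

theorem isFanCombination_fan {D : ℕ} (h : ℕ → (Fin D → ℝ) → ℝ) (μ : ℕ → ℝ)
    (hh : ∀ i < D, IsAffineFn (h i)) (hμ : ∀ i < D - 1, 0 < μ i) :
    IsFanCombination (fan h μ (D - 1)) :=
  ⟨1, 0, fun _ => h, fun _ => μ, fun _ => 1, isAffineFn_const 0, fun _ => hh, fun _ => hμ,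
    by simp⟩

namespace IsFanCombination

variable {D : ℕ} {f g : (Fin D → ℝ) → ℝ}

theorem add (hf : IsFanCombination f) (hg : IsFanCombination g) :
    IsFanCombination fun x => f x + g x := by
  obtain ⟨N, g₀, hw, μ, c, hg₀, hhw, hμ, hfx⟩ := hf
  obtain ⟨N', g₀', hw', μ', c', hg₀', hhw', hμ', hgx⟩ := hg
  refine ⟨N + N', g₀ + g₀', Fin.append hw hw', Fin.append μ μ', Fin.append c c', hg₀.add hg₀',
    Fin.addCases (by simpa using hhw) (by simpa using hhw'),
    Fin.addCases (by simpa using hμ) (by simpa using hμ'), fun x => ?_⟩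
  simp only [Pi.add_apply, hfx, hgx, Fin.sum_univ_add, Fin.append_left, Fin.append_right]
  ring

theorem const_mul (hf : IsFanCombination f) (a : ℝ) : IsFanCombination fun x => a * f x := by
  obtain ⟨N, g₀, hw, μ, c, hg₀, hhw, hμ, hfx⟩ := hf
  refine ⟨N, fun x => a * g₀ x, hw, μ, a • c, hg₀.const_mul a, hhw, hμ, fun x => ?_⟩
  simp only [hfx, Pi.smul_apply, smul_eq_mul, mul_add, mul_sum, mul_assoc]

theorem sum {ι : Type*} (s : Finset ι) {f : ι → (Fin D → ℝ) → ℝ}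
    (hf : ∀ i ∈ s, IsFanCombination (f i)) : IsFanCombination fun x => ∑ i ∈ s, f i x := by
  classical
  induction s using Finset.induction_on with
  | empty => simpa using (isAffineFn_const 0).isFanCombination
  | insert i s hi ih =>
    simp_rw [sum_insert hi]
    exact (hf i (mem_insert_self i s)).add (ih fun j hj => hf j (mem_insert_of_mem hj))

end IsFanCombination

theorem exists_sum_range_max_eq {ι V P : Type*} [AddCommGroup V] [Module ℝ V] [AddTorsor V P]
    (g : ι → P →ᵃ[ℝ] ℝ) (s : Finset ι) {m : ℕ} (hs : #s ≤ m) :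
    ∃ h : ℕ → P →ᵃ[ℝ] ℝ, ∀ x, ∑ j ∈ range m, max (h j x) 0 = ∑ k ∈ s, max (g k x) 0 := by
  let e := s.equivFin.symm
  refine ⟨fun j => if hj : j < #s then g (e ⟨j, hj⟩) else AffineMap.const ℝ P (-1), fun x => ?_⟩
  have hpad : ∀ j ∈ range m, j ∉ range #s →
      max ((if hj : j < #s then g (e ⟨j, hj⟩) else AffineMap.const ℝ P (-1)) x) 0 = 0 := by
    intro j _ hj
    rw [dif_neg (by simpa using hj)]
    norm_num
  rw [← sum_subset (range_subset_range.2 hs) hpad, sum_range, ← sum_coe_sort s,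
    ← e.sum_comp]
  exact sum_congr rfl fun j _ => by rw [dif_pos j.2]

theorem IsFanCombination.max_sub_sum {D : ℕ} (hD : 2 ≤ D) {ι : Type*}
    (a : (Fin D → ℝ) →ᵃ[ℝ] ℝ) (g : ι → (Fin D → ℝ) →ᵃ[ℝ] ℝ) (s : Finset ι) (hs : #s ≤ D - 1)
    {M : ℝ} (hM : 0 < M) :
    IsFanCombination fun x => max (a x - M * ∑ k ∈ s, max (g k x) 0) 0 := by
  obtain ⟨h, hh⟩ := exists_sum_range_max_eq g s hs
  let H : ℕ → (Fin D → ℝ) →ᵃ[ℝ] ℝ := fun j => if j = 0 then a else h (j - 1)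
  obtain ⟨m, hm⟩ : ∃ m, D - 1 = m + 1 := ⟨D - 2, by omega⟩
  convert isFanCombination_fan (fun j => ⇑(H j)) (fun _ => M) (fun i _ => (H i).isAffineFn)
    (fun _ _ => hM) using 2 with x
  rw [hm, fan_succ _ (fun _ => hM.le), ← mul_sum, ← hm, ← hh]
  simp [H]

noncomputable def ramp (η u : ℝ) : ℝ := (max u 0 - max (u - η) 0) / η

theorem ramp_of_nonpos {η u : ℝ} (hη : 0 ≤ η) (hu : u ≤ 0) : ramp η u = 0 := by
  simp [ramp, max_eq_right hu, max_eq_right (show u - η ≤ 0 by linarith)]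

theorem ramp_of_le {η u : ℝ} (hη : 0 < η) (hu : η ≤ u) : ramp η u = 1 := by
  rw [ramp, max_eq_left (by linarith), max_eq_left (by linarith), sub_sub_cancel,
    div_self hη.ne']

theorem IsFanCombination.ramp_sub_sum {D : ℕ} (hD : 2 ≤ D) {ι : Type*}
    (a : (Fin D → ℝ) →ᵃ[ℝ] ℝ) (g : ι → (Fin D → ℝ) →ᵃ[ℝ] ℝ) (s : Finset ι) (hs : #s ≤ D - 1)
    {M : ℝ} (hM : 0 < M) (η : ℝ) :
    IsFanCombination fun x => ramp η (a x - M * ∑ k ∈ s, max (g k x) 0) := by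
  convert ((max_sub_sum hD a g s hs hM).const_mul η⁻¹).add
    ((max_sub_sum hD (a - AffineMap.const ℝ _ η) g s hs hM).const_mul (-η⁻¹)) using 1
  ext x
  simp only [ramp, AffineMap.coe_sub, AffineMap.coe_const, Pi.sub_apply,
    Function.const_apply, sub_right_comm _ η]
  ring

theorem ramp_eq_ite {ι : Type*} [DecidableEq ι] (l : ι → ℝ) {T : Finset ι} {t₀ : ι}
    (ht₀ : t₀ ∈ T) {η M : ℝ} (hη : 0 < η) (hM : 0 ≤ M) (hl : ∀ k ∈ T, η < |l k|)
    (hlM : -l t₀ ≤ M * η) :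
    ramp η (-l t₀ - M * ∑ k ∈ T.erase t₀, max (l k) 0) = if ∀ k ∈ T, l k < 0 then 1 else 0 := by
  have hsum : 0 ≤ ∑ k ∈ T.erase t₀, max (l k) 0 := sum_nonneg fun _ _ => le_max_right _ _
  split_ifs with hneg
  · have hzero : ∑ k ∈ T.erase t₀, max (l k) 0 = 0 :=
      sum_eq_zero fun k hk => max_eq_right (hneg k (mem_of_mem_erase hk)).le
    have ht₀η : η ≤ -l t₀ := by
      have := hl t₀ ht₀
      rw [abs_of_neg (hneg t₀ ht₀)] at this
      exact this.le
    rw [hzero, mul_zero, sub_zero, ramp_of_le hη ht₀η]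
  · push Not at hneg
    obtain ⟨k, hk, hlk⟩ := hneg
    have hηk : η < l k := by simpa [abs_of_nonneg hlk] using hl k hk
    refine ramp_of_nonpos hη.le ?_
    by_cases hkt₀ : k = t₀
    · subst hkt₀
      nlinarith
    · have : l k ≤ ∑ k ∈ T.erase t₀, max (l k) 0 :=
        (le_max_left _ _).trans
          (single_le_sum (fun _ _ => le_max_right _ _) (mem_erase.2 ⟨hkt₀, hk⟩))
      nlinarith

section Simplex

variable {ι E : Type*} [Fintype ι] [DecidableEq ι] [AddCommGroup E] [Module ℝ E]

theorem AffineBasis.indicator_convexHull_eq (b : AffineBasis ι ℝ E) (x : E) :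
    (convexHull ℝ (Set.range b)).indicator (fun _ => 1) x =
      1 + ∑ T ∈ {T ∈ (univ : Finset ι).powerset | T.Nonempty}.erase univ,
        (-1) ^ #T * (⋂ k ∈ T, {y | b.coord k y < 0}).indicator (fun _ => (1 : ℝ)) x := by
  have hcompl : convexHull ℝ (Set.range b) = (⋃ k ∈ univ, {y | b.coord k y < 0})ᶜ := by
    ext y
    simp [b.convexHull_eq_nonneg_coord]
  have hempty : (⋂ k ∈ univ, {y | b.coord k y < 0}) = ∅ := by
    refine Set.eq_empty_of_forall_notMem fun y hy => ?_
    have hnonpos : ∑ k, b.coord k y ≤ 0 :=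
      sum_nonpos fun k _ => le_of_lt (Set.mem_iInter₂.1 hy k (mem_univ k))
    linarith [b.sum_coord_apply_eq_one y]
  rw [hcompl, Set.indicator_compl, Pi.sub_apply, indicator_biUnion_eq_sum_powerset,
    ← sum_erase _ (a := univ) (by rw [hempty]; simp)]
  simp [pow_succ, sub_eq_add_neg, sum_neg_distrib]

noncomputable def simplexApprox (b : AffineBasis ι ℝ E) (pivot : Finset ι → ι) (η M : ℝ)
    (x : E) : ℝ :=
  1 + ∑ T ∈ {T ∈ (univ : Finset ι).powerset | T.Nonempty}.erase univ,
    (-1) ^ #T * ramp η (-b.coord (pivot T) x - M * ∑ k ∈ T.erase (pivot T), max (b.coord k x) 0)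

theorem AffineBasis.indicator_convexHull_eq_simplexApprox (b : AffineBasis ι ℝ E)
    {pivot : Finset ι → ι} (hpivot : ∀ T : Finset ι, T.Nonempty → pivot T ∈ T) {η M : ℝ}
    (hη : 0 < η) (hM : 0 ≤ M) {x : E} (hx : ∀ k, η < |b.coord k x|)
    (hxM : ∀ k, -b.coord k x ≤ M * η) :
    (convexHull ℝ (Set.range b)).indicator (fun _ => 1) x = simplexApprox b pivot η M x := by
  classical
  rw [b.indicator_convexHull_eq]
  refine congrArg _ (sum_congr rfl fun T hT => ?_)
  have hT : T.Nonempty := (mem_filter.1 (mem_of_mem_erase hT)).2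
  rw [ramp_eq_ite (fun k => b.coord k x) (hpivot T hT) hη hM (fun k _ => hx k) (hxM _),
    Set.indicator_apply]
  simp

end Simplex

theorem isFanCombination_simplexApprox {D : ℕ} (hD : 2 ≤ D)
    (b : AffineBasis (Fin (D + 1)) ℝ (Fin D → ℝ)) {pivot : Finset (Fin (D + 1)) → Fin (D + 1)}
    (hpivot : ∀ T : Finset (Fin (D + 1)), T.Nonempty → pivot T ∈ T) {M : ℝ} (hM : 0 < M)
    (η : ℝ) : IsFanCombination (simplexApprox b pivot η M) := by
  refine (isAffineFn_const 1).isFanCombination.add (IsFanCombination.sum _ fun T hT => ?_)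
  have hcard : #(T.erase (pivot T)) ≤ D - 1 := by
    have hTu : #T < D + 1 := by simpa using (card_lt_iff_ne_univ T).2 (ne_of_mem_erase hT)
    rw [card_erase_of_mem (hpivot T (mem_filter.1 (mem_of_mem_erase hT)).2)]
    omega
  exact (IsFanCombination.ramp_sub_sum hD (-b.coord (pivot T)) (fun k => b.coord k) _ hcard hM
    η).const_mul _

section Slab

variable {E : Type*} [NormedAddCommGroup E] [NormedSpace ℝ E] [MeasurableSpace E] [BorelSpace E]
  [FiniteDimensional ℝ E] (μ : Measure E) [μ.IsAddHaarMeasure] {s : Set E}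

theorem measure_setOf_affineMap_eq_zero {f : E →ᵃ[ℝ] ℝ} (hf : f ≠ 0) : μ {x | f x = 0} = 0 := by
  have hsub : {x | f x = 0} = (AffineSubspace.comap f (⊥ : Submodule ℝ ℝ) : Set E) := by
    ext x
    simp
  rw [hsub]
  refine Measure.addHaar_affineSubspace μ _ fun htop => hf (AffineMap.ext fun x => ?_)
  have : x ∈ AffineSubspace.comap f (⊥ : Submodule ℝ ℝ) := htop ▸ AffineSubspace.mem_top ℝ E x
  simpa using this

theorem tendsto_measure_inter_abs_le (hs : MeasurableSet s) (hμs : μ s ≠ ∞) {f : E →ᵃ[ℝ] ℝ}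
    (hf : f ≠ 0) : Tendsto (fun η => μ (s ∩ {x | |f x| ≤ η})) (𝓝[>] 0) (𝓝 0) := by
  have hclosed : ∀ η, MeasurableSet {x | |f x| ≤ η} := fun η =>
    (isClosed_le (continuous_abs.comp f.continuous_of_finiteDimensional)
      continuous_const).measurableSet
  have hlim := tendsto_measure_biInter_gt (μ := μ) (s := fun η => s ∩ {x | |f x| ≤ η}) (a := 0)
    (fun η _ => (hs.inter (hclosed η)).nullMeasurableSet)
    (fun η η' _ hηη' => Set.inter_subset_inter_right _ fun x hx => le_trans hx hηη')
    ⟨1, one_pos, ne_top_of_le_ne_top hμs (measure_mono Set.inter_subset_left)⟩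
  have hzero : μ (⋂ η > 0, s ∩ {x | |f x| ≤ η}) = 0 := by
    refine measure_mono_null (fun x hx => ?_) (measure_setOf_affineMap_eq_zero μ hf)
    simp only [Set.mem_iInter, Set.mem_inter_iff, Set.mem_ofPred_eq] at hx
    exact abs_eq_zero.1 (le_antisymm (le_of_forall_pos_le_add fun ε hε => by
      simpa using (hx ε hε).2) (abs_nonneg _))
  rwa [hzero] at hlim

theorem eventually_measure_inter_exists_abs_le_lt {ι : Type*} [Finite ι] (hs : MeasurableSet s)
    (hμs : μ s ≠ ∞) {f : ι → E →ᵃ[ℝ] ℝ} (hf : ∀ i, f i ≠ 0) {ε : ℝ≥0∞} (hε : 0 < ε) :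
    ∀ᶠ η in 𝓝[>] 0, μ (s ∩ {x | ∃ i, |f i x| ≤ η}) < ε := by
  have := Fintype.ofFinite ι
  have hsum : Tendsto (fun η => ∑ i, μ (s ∩ {x | |f i x| ≤ η})) (𝓝[>] 0) (𝓝 0) := by
    simpa using tendsto_finsetSum univ fun i _ => tendsto_measure_inter_abs_le μ hs hμs (hf i)
  filter_upwards [hsum.eventually_lt_const hε] with η hη
  refine lt_of_le_of_lt ?_ hη
  calc μ (s ∩ {x | ∃ i, |f i x| ≤ η}) = μ (⋃ i, s ∩ {x | |f i x| ≤ η}) := by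
        congr 1
        ext x
        simp
    _ ≤ ∑ i, μ (s ∩ {x | |f i x| ≤ η}) := measure_iUnion_fintype_le μ _

end Slab

theorem AffineIndependent.exists_affineBasis {k V P ι : Type*} [DivisionRing k] [AddCommGroup V]
    [Module k V] [AddTorsor V P] [FiniteDimensional k V] [Fintype ι] {p : ι → P}
    (hp : AffineIndependent k p) (hcard : Fintype.card ι = Module.finrank k V + 1) :
    ∃ b : AffineBasis ι k P, ⇑b = p :=
  ⟨⟨p, hp, hp.affineSpan_eq_top_iff_card_eq_finrank_add_one.2 hcard⟩, rfl⟩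

theorem IsCompact.exists_pos_forall_abs_le {E ι : Type*} [TopologicalSpace E] [Finite ι]
    {K : Set E} (hK : IsCompact K) {f : ι → E → ℝ} (hf : ∀ i, Continuous (f i)) :
    ∃ R > 0, ∀ x ∈ K, ∀ i, |f i x| ≤ R := by
  have := Fintype.ofFinite ι
  let F : E → ι → ℝ := fun x i => f i x
  obtain ⟨R, hR, hFR⟩ := (hK.image (continuous_pi hf : Continuous F)).isBounded.exists_pos_norm_le
  exact ⟨R, hR, fun x hx i => (norm_le_pi_norm (F x) i).trans (hFR _ (Set.mem_image_of_mem F hx))⟩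

theorem generalized_de_morgan_duality_general (D : ℕ) (hD : 2 ≤ D) (B : ℝ)
    (n : ℕ) (v : Fin n → Fin (D + 1) → (Fin D → ℝ))
    (hv : ∀ i, AffineIndependent ℝ (v i))
    (S : Fin n → Set (Fin D → ℝ))
    (hS : ∀ i, S i = convexHull ℝ (Set.range (v i)))
    (hdisj : ∀ i j, i ≠ j → S i ∩ S j = ∅) :
    ∀ δ > (0 : ℝ),
      ∃ (N : ℕ) (g₀ : (Fin D → ℝ) → ℝ)
        (hw : Fin N → ℕ → (Fin D → ℝ) → ℝ) (μ : Fin N → ℕ → ℝ) (c : Fin N → ℝ),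
        IsAffineFn g₀ ∧
        (∀ j, ∀ i < D, IsAffineFn (hw j i)) ∧ (∀ j, ∀ i < D - 1, 0 < μ j i) ∧
        volume {x : Fin D → ℝ | x ∈ Set.Icc (fun _ => -B) (fun _ => (B : ℝ)) ∧
            g₀ x + ∑ j, c j * fan (hw j) (μ j) (D - 1) x ≠
              Set.indicator (⋃ i, S i) (fun _ => (1 : ℝ)) x} <
          ENNReal.ofReal δ := by
  intro δ hδ
  choose b hb using fun i => (hv i).exists_affineBasis (by simp)
  obtain ⟨η, hslab, hη⟩ : ∃ η, volume (Set.Icc (fun _ => -B) (fun _ => B) ∩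
      {x | ∃ p : Fin n × Fin (D + 1), |(b p.1).coord p.2 x| ≤ η}) < ENNReal.ofReal δ ∧ 0 < η :=
    ((eventually_measure_inter_exists_abs_le_lt volume measurableSet_Icc
      isCompact_Icc.measure_lt_top.ne (fun p h => by simpa [h] using (b p.1).coord_apply_eq p.2)
      (ENNReal.ofReal_pos.2 hδ)).and self_mem_nhdsWithin).exists
  obtain ⟨R, hR, hbound⟩ :=
    (isCompact_Icc (a := fun _ : Fin D => -B) (b := fun _ => B)).exists_pos_forall_abs_le
      fun p : Fin n × Fin (D + 1) => ((b p.1).coord p.2).continuous_of_finiteDimensional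
  choose! pivot hpivot using fun T : Finset (Fin (D + 1)) => fun hT : T.Nonempty => hT
  obtain ⟨N, g₀, hw, μ, c, hg₀, hhw, hμ, hG⟩ := IsFanCombination.sum univ fun i _ =>
    isFanCombination_simplexApprox hD (b i) hpivot (div_pos hR hη) η
  refine ⟨N, g₀, hw, μ, c, hg₀, hhw, hμ, lt_of_le_of_lt (measure_mono fun x hx => ?_) hslab⟩
  obtain ⟨hx, hne⟩ := hx
  refine ⟨hx, ?_⟩
  by_contra! hfar
  refine hne ((hG x).symm.trans ?_)
  rw [indicator_iUnion_of_pairwise_disjoint S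
    (fun i j hij => Set.disjoint_iff_inter_eq_empty.2 (hdisj i j hij))]
  simp only [tsum_fintype]
  refine sum_congr rfl fun i _ => ?_
  rw [hS i, ← hb i]
  refine ((b i).indicator_convexHull_eq_simplexApprox hpivot hη (div_pos hR hη).le
    (fun k => lt_of_not_ge fun h => hfar ⟨(i, k), h⟩) fun k => ?_).symm
  rw [div_mul_cancel₀ R hη.ne']
  exact (neg_le_abs _).trans (hbound x hx (i, k))

/-- The generalized De Morgan duality: a disjoint rule system over `D`-simplices,
i.e., the indicator of the union of pairwise disjoint simplices contained in
`[-B, B]^D`, is represented, up to arbitrarily small Lebesgue measure, by an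
affine function plus finitely many fan-shaped ReLU terms. -/
theorem generalized_de_morgan_duality (D : ℕ) (hD : 2 ≤ D) (B : ℝ) (hB : 0 < B)
    (n : ℕ) (v : Fin n → Fin (D + 1) → (Fin D → ℝ))
    (hv : ∀ i, AffineIndependent ℝ (v i))
    (S : Fin n → Set (Fin D → ℝ))
    (hS : ∀ i, S i = convexHull ℝ (Set.range (v i)))
    (hSB : ∀ i, S i ⊆ Set.Icc (fun _ => -B) (fun _ => (B : ℝ)))
    (hdisj : ∀ i j, i ≠ j → S i ∩ S j = ∅) :
    ∀ δ > (0 : ℝ),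
      ∃ (N : ℕ) (g₀ : (Fin D → ℝ) → ℝ)
        (hw : Fin N → ℕ → (Fin D → ℝ) → ℝ) (μ : Fin N → ℕ → ℝ) (c : Fin N → ℝ),
        IsAffineFn g₀ ∧
        (∀ j, ∀ i < D, IsAffineFn (hw j i)) ∧ (∀ j, ∀ i < D - 1, 0 < μ j i) ∧
        volume {x : Fin D → ℝ | x ∈ Set.Icc (fun _ => -B) (fun _ => (B : ℝ)) ∧
            g₀ x + ∑ j, c j * fan (hw j) (μ j) (D - 1) x ≠
              Set.indicator (⋃ i, S i) (fun _ => (1 : ℝ)) x} <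
          ENNReal.ofReal δ :=
  generalized_de_morgan_duality_general D hD B n v hv S hS hdisj
end
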